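/- arXiv:2306.13560 — 2 statements merged into one kernel-verified Lean document; each statement's English description precedes it below -/
import Mathlib

section
/- Let d ≥ 1, let p, q : Fin n → (Fin d → ℝ) be any two configurations, let i ∈ Fin n, and let τ be a (d+1)-element subset of Fin n with i ∉ τ. If for every j ∈ τ the signed volumes agree on the simplex obtained by replacing j with i, i.e. vol_{(τ \ {j}) ∪ {i}}(p) = vol_{(τ \ {j}) ∪ {i}}(q), then vol_τ(p) = vol_τ(q). -/
/-!
Put `σ = insert i τ`, a set of `d + 2` vertices. The `(d+2) × (d+2)` matrix whose first two rows
are all ones and whose remaining columns are the points of `σ` is singular, and its Laplace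
expansion along the first row is the alternating sum of the volumes of the `d + 2` facets of `σ`.
So this sum vanishes for every configuration, and the facet `τ` has the same volume under `p` and
`q` as soon as all the other facets, which are the simplices `insert i (τ.erase j)`, do.
-/

/-- The signed `d`-volume of the `(d+1)`-element simplex `σ ⊆ Fin n` at the configuration
`p : Fin n → Fin d → ℝ`.  Junk value `0` if `σ` does not have `d+1` elements. -/
noncomputable def vol {n : ℕ} (d : ℕ) (σ : Finset (Fin n)) (p : Fin n → Fin d → ℝ) : ℝ :=
  if h : σ.card = d + 1 then
    Matrix.det
      ((Matrix.of (Fin.cons (fun _ => (1 : ℝ)) fun i j => p (σ.orderEmbOfFin h j) i) :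
        Matrix (Fin (d + 1)) (Fin (d + 1)) ℝ))
  else 0

open Finset Matrix

theorem Finset.orderEmbOfFin_erase {α : Type*} [LinearOrder α] {s : Finset α} {k : ℕ}
    (h : s.card = k + 1) (j : Fin (k + 1)) (h' : (s.erase (s.orderEmbOfFin h j)).card = k) :
    ⇑((s.erase (s.orderEmbOfFin h j)).orderEmbOfFin h') = s.orderEmbOfFin h ∘ j.succAbove :=
  (orderEmbOfFin_unique h'
    (fun c => mem_erase.2 ⟨fun hc => j.succAbove_ne c ((s.orderEmbOfFin h).injective hc),
      orderEmbOfFin_mem s h _⟩)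
    ((s.orderEmbOfFin h).strictMono.comp (Fin.strictMono_succAbove j))).symm

theorem vol_erase_orderEmbOfFin {d n : ℕ} (p : Fin n → Fin d → ℝ) {σ : Finset (Fin n)}
    (hσ : σ.card = d + 2) (k : Fin (d + 2)) :
    vol d (σ.erase (σ.orderEmbOfFin hσ k)) p =
      (of (Fin.cons (fun _ => (1 : ℝ)) fun r c => p (σ.orderEmbOfFin hσ (k.succAbove c)) r) :
        Matrix (Fin (d + 1)) (Fin (d + 1)) ℝ).det := by
  have hcard : (σ.erase (σ.orderEmbOfFin hσ k)).card = d + 1 := by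
    rw [card_erase_of_mem (orderEmbOfFin_mem σ hσ k), hσ]
    rfl
  rw [vol, dif_pos hcard, orderEmbOfFin_erase hσ k hcard]
  rfl

theorem sum_neg_one_pow_mul_vol_erase_eq_zero {d n : ℕ} (p : Fin n → Fin d → ℝ)
    {σ : Finset (Fin n)} (hσ : σ.card = d + 2) :
    ∑ k : Fin (d + 2), (-1 : ℝ) ^ (k : ℕ) * vol d (σ.erase (σ.orderEmbOfFin hσ k)) p = 0 := by
  set M : Matrix (Fin (d + 2)) (Fin (d + 2)) ℝ :=
    of (Fin.cons (fun _ => 1) (Fin.cons (fun _ => 1) fun r c => p (σ.orderEmbOfFin hσ c) r))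
  have hM : M.det = 0 := det_zero_of_row_eq (i := 0) (j := 1) Fin.zero_ne_one rfl
  rw [det_succ_row_zero] at hM
  rw [← hM]
  refine sum_congr rfl fun k _ => ?_
  rw [vol_erase_orderEmbOfFin]
  simp only [M, of_apply, Fin.cons_zero, mul_one]
  congr 2
  ext r c
  refine Fin.cases ?_ (fun _ => ?_) r <;> rfl

theorem vol_erase_eq_of_forall_vol_erase_eq {d n : ℕ} {p q : Fin n → Fin d → ℝ}
    {σ : Finset (Fin n)} (hσ : σ.card = d + 2) {a : Fin n} (ha : a ∈ σ)
    (h : ∀ b ∈ σ, b ≠ a → vol d (σ.erase b) p = vol d (σ.erase b) q) :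
    vol d (σ.erase a) p = vol d (σ.erase a) q := by
  set e := σ.orderEmbOfFin hσ
  obtain ⟨k₀, rfl⟩ : a ∈ Set.range e := by rwa [range_orderEmbOfFin]
  let f (r : Fin n → Fin d → ℝ) (k : Fin (d + 2)) := (-1 : ℝ) ^ (k : ℕ) * vol d (σ.erase (e k)) r
  have hf (r) : f r k₀ = -∑ k ∈ univ.erase k₀, f r k := by
    rw [eq_neg_iff_add_eq_zero, add_sum_erase _ _ (mem_univ k₀)]
    exact sum_neg_one_pow_mul_vol_erase_eq_zero r hσ
  have hrest : ∑ k ∈ univ.erase k₀, f p k = ∑ k ∈ univ.erase k₀, f q k :=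
    sum_congr rfl fun k hk => congrArg _ <|
      h _ (orderEmbOfFin_mem σ hσ k) (e.injective.ne (ne_of_mem_erase hk))
  have hk₀ : f p k₀ = f q k₀ := by rw [hf, hf, hrest]
  exact mul_left_cancel₀ (pow_ne_zero _ (neg_ne_zero.2 one_ne_zero)) hk₀

theorem vol_eq_of_swaps_general (d n : ℕ) (p q : Fin n → Fin d → ℝ) (i : Fin n)
    (τ : Finset (Fin n)) (hτ : τ.card = d + 1) (hiτ : i ∉ τ)
    (h : ∀ j ∈ τ, vol d (insert i (τ.erase j)) p = vol d (insert i (τ.erase j)) q) :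
    vol d τ p = vol d τ q := by
  have hσ : (insert i τ).card = d + 2 := by rw [card_insert_of_notMem hiτ, hτ]
  rw [← erase_insert hiτ]
  refine vol_erase_eq_of_forall_vol_erase_eq hσ (mem_insert_self i τ) fun j hj hji => ?_
  have hjτ : j ∈ τ := (mem_insert.1 hj).resolve_left hji
  rw [erase_insert_of_ne (Ne.symm hji)]
  exact h j hjτ

/-- If two configurations `p, q` assign equal signed volumes to every simplex obtained
from `τ` by swapping one of its vertices `j` for the outside vertex `i`, then they assign
equal signed volumes to `τ` itself. -/
theorem vol_eq_of_swaps (d n : ℕ) (hd : 1 ≤ d) (p q : Fin n → Fin d → ℝ) (i : Fin n)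
    (τ : Finset (Fin n)) (hτ : τ.card = d + 1) (hiτ : i ∉ τ)
    (h : ∀ j ∈ τ, vol d (insert i (τ.erase j)) p = vol d (insert i (τ.erase j)) q) :
    vol d τ p = vol d τ q :=
  vol_eq_of_swaps_general d n p q i τ hτ hiτ h
end

section
/- Let d ≥ 1 and let F be a family of (d+1)-element subsets of {1,…,n} that is independent in the d-volume rigidity matroid R_n^d. Then F supports no nonzero simplicial d-cycle over ℝ: if c : F → ℝ satisfies, for every d-element subset T of {1,…,n}, Σ_{σ ∈ F, T ⊆ σ} (−1)^{r(σ,T)} · c(σ) = 0, where r(σ,T) is the (0-indexed) position of the unique element of σ \ T in the increasing enumeration of σ, then c = 0. -/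
/-!
Expanding `vol_σ` along its row of ones writes it as `∑_{T ⊂ σ, |T| = d} ±det_T`, where `det_T` is
the `d × d` determinant of the coordinates of the points of `T` and the sign is exactly the
incidence sign of the simplicial boundary. Hence for a cycle `c` the polynomial `∑_σ c_σ vol_σ`
vanishes identically, so `∑_σ c_σ ∇vol_σ(p) = 0` at every `p`, and independence of the gradients
at one `p` forces `c = 0`.
-/

open Finset

namespace Finset

theorem powersetCard_eq_image_erase {α : Type*} [DecidableEq α] (s : Finset α) {k : ℕ}
    (h : #s = k + 1) :
    s.powersetCard k = s.image s.erase := by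
  ext T
  simp only [mem_powersetCard, mem_image]
  constructor
  · rintro ⟨hTs, hT⟩
    obtain ⟨x, hx⟩ := card_eq_one.1 (by rw [card_sdiff_of_subset hTs]; omega : #(s \ T) = 1)
    refine ⟨x, (mem_sdiff.1 (hx ▸ mem_singleton_self x)).1, ?_⟩
    rw [erase_eq, ← hx, sdiff_sdiff_eq_self hTs]
  · rintro ⟨x, hx, rfl⟩
    exact ⟨erase_subset x s, by rw [card_erase_of_mem hx, h]; rfl⟩

variable {α : Type*} [LinearOrder α]

theorem card_filter_lt_orderEmbOfFin (s : Finset α) {k : ℕ} (h : #s = k) (j : Fin k) :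
    #{y ∈ s | y < s.orderEmbOfFin h j} = j := by
  set e := s.orderEmbOfFin h
  conv_lhs => rw [← map_orderEmbOfFin_univ s h]
  rw [filter_map, card_map]
  change #{i | e i < e j} = j
  simp only [e.lt_iff_lt, filter_gt_eq_Iio, Fin.card_Iio]

theorem orderEmbOfFin_erase_s7 (s : Finset α) {k : ℕ} (h : #s = k + 1) (j : Fin (k + 1))
    (h' : #(s.erase (s.orderEmbOfFin h j)) = k) (i : Fin k) :
    (s.erase (s.orderEmbOfFin h j)).orderEmbOfFin h' i = s.orderEmbOfFin h (j.succAbove i) := by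
  refine (congrFun (orderEmbOfFin_unique h' (fun i => mem_erase.2 ⟨?_, orderEmbOfFin_mem s h _⟩)
    ((s.orderEmbOfFin h).strictMono.comp (Fin.strictMono_succAbove j))) i).symm
  exact (s.orderEmbOfFin h).injective.ne (Fin.succAbove_ne j i)

theorem sum_neg_one_pow_mul_erase {R : Type*} [CommRing R] [DecidableEq α] (s : Finset α)
    {k : ℕ} (h : #s = k + 1) (g : Finset α → R) :
    ∑ x ∈ s, (-1 : R) ^ #{y ∈ s | y < x} * g (s.erase x) =
      ∑ T ∈ s.powersetCard k, (∑ x ∈ s \ T, (-1 : R) ^ #{y ∈ s | y < x}) * g T := by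
  rw [powersetCard_eq_image_erase s h, sum_image s.erase_injOn]
  refine sum_congr rfl fun x hx => ?_
  rw [sdiff_erase_self hx, sum_singleton]

end Finset

section fderiv

variable {𝕜 E ι : Type*} [NontriviallyNormedField 𝕜] [NormedAddCommGroup E] [NormedSpace 𝕜 E]

theorem Differentiable.matrix_det {m : Type*} [Fintype m] [DecidableEq m]
    {M : E → Matrix m m 𝕜} (hM : ∀ i j, Differentiable 𝕜 fun x => M x i j) :
    Differentiable 𝕜 fun x => (M x).det := by
  simp only [Matrix.det_apply']
  fun_prop

theorem LinearIndependent.eq_zero_of_sum_mul_eq_zero [Fintype ι] {f : ι → E → 𝕜} {x : E}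
    (hf : ∀ i, DifferentiableAt 𝕜 (f i) x)
    (hli : LinearIndependent 𝕜 fun i => fderiv 𝕜 (f i) x) {c : ι → 𝕜}
    (hc : ∀ y, ∑ i, c i * f i y = 0) : c = 0 := by
  have hderiv : HasFDerivAt (fun y => ∑ i, c i * f i y) (∑ i, c i • fderiv 𝕜 (f i) x) x :=
    HasFDerivAt.fun_sum fun i _ => (hf i).hasFDerivAt.const_mul (c i)
  simp only [hc] at hderiv
  exact funext (Fintype.linearIndependent_iff.1 hli c ((hasFDerivAt_const 0 x).unique hderiv).symm)

end fderiv

section vol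

variable {n d : ℕ}

noncomputable def coordDet (d : ℕ) (T : Finset (Fin n)) (p : Fin n → Fin d → ℝ) : ℝ :=
  if h : #T = d then
    (Matrix.of fun i k => p (T.orderEmbOfFin h k) i : Matrix (Fin d) (Fin d) ℝ).det
  else 0

theorem vol_eq_sum_coordDet {σ : Finset (Fin n)} (h : #σ = d + 1) (p : Fin n → Fin d → ℝ) :
    vol d σ p = ∑ x ∈ σ, (-1 : ℝ) ^ #{y ∈ σ | y < x} * coordDet d (σ.erase x) p := by
  set e := σ.orderEmbOfFin h
  have hreindex := sum_map univ e.toEmbedding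
    fun x => (-1 : ℝ) ^ #{y ∈ σ | y < x} * coordDet d (σ.erase x) p
  rw [map_orderEmbOfFin_univ] at hreindex
  rw [hreindex, vol, dif_pos h, Matrix.det_succ_row_zero]
  refine sum_congr rfl fun j _ => ?_
  have hcard : #(σ.erase (e j)) = d := by
    rw [card_erase_of_mem (orderEmbOfFin_mem σ h j), h, Nat.add_sub_cancel]
  have hminor : (Matrix.of (Fin.cons (fun _ => (1 : ℝ)) fun i j => p (e j) i)).submatrix
      Fin.succ j.succAbove = Matrix.of fun i k => p ((σ.erase (e j)).orderEmbOfFin hcard k) i := by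
    ext i k
    simp only [Matrix.submatrix_apply, Matrix.of_apply, Fin.cons_succ,
      orderEmbOfFin_erase_s7 σ h j hcard k, e]
  simp only [RelEmbedding.coe_toEmbedding, card_filter_lt_orderEmbOfFin, coordDet, dif_pos hcard,
    hminor, Matrix.of_apply, Fin.cons_zero, mul_one, e]

theorem differentiable_vol (σ : Finset (Fin n)) : Differentiable ℝ (vol d σ) := by
  unfold vol
  split_ifs with h
  · refine Differentiable.matrix_det fun i j => ?_
    cases i using Fin.cases <;> simp only [Matrix.of_apply, Fin.cons_zero, Fin.cons_succ] <;>
      fun_prop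
  · exact differentiable_const 0

theorem sum_mul_vol_eq_zero (F : Finset (Finset (Fin n))) (hcard : ∀ σ ∈ F, #σ = d + 1)
    (c : Finset (Fin n) → ℝ)
    (hc : ∀ T : Finset (Fin n), #T = d →
      ∑ σ ∈ F.filter (fun σ => T ⊆ σ),
        (∑ x ∈ σ \ T, (-1 : ℝ) ^ ((σ.filter fun y => y < x).card)) * c σ = 0)
    (p : Fin n → Fin d → ℝ) :
    ∑ σ ∈ F, c σ * vol d σ p = 0 := by
  calc ∑ σ ∈ F, c σ * vol d σ p
      = ∑ σ ∈ F, ∑ T ∈ σ.powersetCard d,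
          (∑ x ∈ σ \ T, (-1 : ℝ) ^ #{y ∈ σ | y < x}) * c σ * coordDet d T p := by
        refine sum_congr rfl fun σ hσ => ?_
        rw [vol_eq_sum_coordDet (hcard σ hσ),
          sum_neg_one_pow_mul_erase σ (hcard σ hσ) (coordDet d · p), mul_sum]
        exact sum_congr rfl fun T _ => by ring
    _ = ∑ T ∈ univ.powersetCard d, (∑ σ ∈ F.filter (fun σ => T ⊆ σ),
          (∑ x ∈ σ \ T, (-1 : ℝ) ^ #{y ∈ σ | y < x}) * c σ) * coordDet d T p := by
        simp only [sum_mul]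
        refine sum_comm' fun σ T => ?_
        simp only [mem_powersetCard, mem_filter, subset_univ, true_and]
        tauto
    _ = 0 := sum_eq_zero fun T hT => by rw [hc T (mem_powersetCard.1 hT).2, zero_mul]

end vol

theorem no_nonzero_cycle_of_indep_general (d n : ℕ)
    (F : Finset (Finset (Fin n))) (hcard : ∀ σ ∈ F, σ.card = d + 1)
    (hindep : ∃ p : Fin n → Fin d → ℝ,
      LinearIndependent ℝ fun σ : F => fderiv ℝ (vol d σ.1) p)
    (c : Finset (Fin n) → ℝ)
    (hc : ∀ T : Finset (Fin n), T.card = d →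
      ∑ σ ∈ F.filter (fun σ => T ⊆ σ),
        (∑ x ∈ σ \ T, (-1 : ℝ) ^ ((σ.filter fun y => y < x).card)) * c σ = 0) :
    ∀ σ ∈ F, c σ = 0 := by
  obtain ⟨p, hp⟩ := hindep
  have hsum (q : Fin n → Fin d → ℝ) : ∑ σ : F, c σ * vol d σ q = 0 := by
    rw [sum_coe_sort F fun σ => c σ * vol d σ q]
    exact sum_mul_vol_eq_zero F hcard c hc q
  have hc_zero : (fun σ : F => c σ) = 0 :=
    hp.eq_zero_of_sum_mul_eq_zero (f := fun σ : F => vol d σ.1)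
      (fun σ => (differentiable_vol σ.1).differentiableAt) hsum
  exact fun σ hσ => congrFun hc_zero ⟨σ, hσ⟩

/-- A family independent in the `d`-volume rigidity matroid supports no nonzero simplicial
`d`-cycle over `ℝ`.  The coefficient `(∑ x ∈ σ \ T, (-1)^{#{y ∈ σ : y < x}})` equals
`(-1)^{r(σ,T)}` where `r(σ,T)` is the 0-indexed position, in the increasing enumeration of
`σ`, of the unique element of `σ \ T` (for `T ⊆ σ` with `|T| = d`, `|σ| = d+1`). -/
theorem no_nonzero_cycle_of_indep (d n : ℕ) (hd : 1 ≤ d)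
    (F : Finset (Finset (Fin n))) (hcard : ∀ σ ∈ F, σ.card = d + 1)
    (hindep : ∃ p : Fin n → Fin d → ℝ,
      LinearIndependent ℝ fun σ : F => fderiv ℝ (vol d σ.1) p)
    (c : Finset (Fin n) → ℝ)
    (hc : ∀ T : Finset (Fin n), T.card = d →
      ∑ σ ∈ F.filter (fun σ => T ⊆ σ),
        (∑ x ∈ σ \ T, (-1 : ℝ) ^ ((σ.filter fun y => y < x).card)) * c σ = 0) :
    ∀ σ ∈ F, c σ = 0 :=
  no_nonzero_cycle_of_indep_general d n F hcard hindep c hc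
end
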